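/- Let n ≥ 1, let E be a real normed vector space, let U ⊆ E be open with a measure μ, and let L̄ : ℝ → Matrix (Fin n) (Fin n) ℝ → (E →L[ℝ] Matrix (Fin n) (Fin n) ℝ) → ℝ. Let χ, Λ : U → Matrix (Fin n) (Fin n) ℝ be differentiable with Λ(m) invertible for all m ∈ U, let v : U → Matrix (Fin n) (Fin n) ℝ, and let γ₀ be a matrix-valued one-form on U. Assume: (i) right invariance of L̄ under the values of Λ, i.e. L̄(t, a*Λ(m), fun w => (B w)*Λ(m)) = L̄(t, a, B) for all t, a, B, m; and (ii) Λ lies in the isotropy group of γ₀, i.e. θ_Λ(γ₀)(m) = γ₀(m) for every m ∈ U. Then for every t, ∫_U L̄(t, v(m)*Λ(m), fun w => d(fun x => χ(x)*Λ(x))(m) w − (χ(m)*Λ(m)) * (γ₀(m) w)) dμ(m) = ∫_U L̄(t, v(m), fun w => dχ(m) w − χ(m) * (γ₀(m) w)) dμ(m); i.e. the Lagrangian L^𝓛_{γ₀}(χ, v) := L^𝓛(t, χ, v, γ₀) is invariant under right translation by Λ: L^𝓛_{γ₀}(χΛ, vΛ) = L^𝓛_{γ₀}(χ, v). -/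

import Mathlib

open MeasureTheory

attribute [local instance] Matrix.normedAddCommGroup Matrix.normedSpace

/-- Right multiplication by a fixed matrix, as a continuous linear map. -/
noncomputable def mulR {n : ℕ} (A : Matrix (Fin n) (Fin n) ℝ) :
    Matrix (Fin n) (Fin n) ℝ →L[ℝ] Matrix (Fin n) (Fin n) ℝ :=
  LinearMap.toContinuousLinearMap (LinearMap.mulRight ℝ A)

/-- Left multiplication by a fixed matrix, as a continuous linear map. -/
noncomputable def mulL {n : ℕ} (A : Matrix (Fin n) (Fin n) ℝ) :
    Matrix (Fin n) (Fin n) ℝ →L[ℝ] Matrix (Fin n) (Fin n) ℝ :=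
  LinearMap.toContinuousLinearMap (LinearMap.mulLeft ℝ A)

@[simp] lemma mulR_apply {n : ℕ} (A B : Matrix (Fin n) (Fin n) ℝ) : mulR A B = B * A := rfl
@[simp] lemma mulL_apply {n : ℕ} (A B : Matrix (Fin n) (Fin n) ℝ) : mulL A B = A * B := rfl

/-- Matrix multiplication as a continuous bilinear map. -/
noncomputable def mulCLM (n : ℕ) : Matrix (Fin n) (Fin n) ℝ →L[ℝ]
    Matrix (Fin n) (Fin n) ℝ →L[ℝ] Matrix (Fin n) (Fin n) ℝ :=
  LinearMap.toContinuousLinearMap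
  { toFun := mulL
    map_add' := by intro a b; ext c; simp [add_mul]
    map_smul' := by intro r a; ext c; simp }

/-- Product rule for matrix-valued maps. -/
lemma hasFDerivAt_matmul {n : ℕ} {E : Type*} [NormedAddCommGroup E] [NormedSpace ℝ E]
    {χ Λ : E → Matrix (Fin n) (Fin n) ℝ} {m : E}
    (hf : DifferentiableAt ℝ χ m) (hg : DifferentiableAt ℝ Λ m) :
    HasFDerivAt (fun x => χ x * Λ x)
      ((mulR (Λ m)).comp (fderiv ℝ χ m) + (mulL (χ m)).comp (fderiv ℝ Λ m)) m := by
  have h := ((mulCLM n).isBoundedBilinearMap.hasFDerivAt (χ m, Λ m)).comp m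
    (HasFDerivAt.prodMk (hf.hasFDerivAt) (hg.hasFDerivAt))
  refine h.congr_fderiv ?_
  ext w
  simp [mulCLM, IsBoundedBilinearMap.deriv_apply, add_comm]
  rfl

/-- For fixed `γ₀`, the Lagrangian `L^𝓛_{γ₀}(χ, v) = ∫_U L̄(t, v, dχ − χγ₀) dμ` is
invariant under right translation by any `Λ` in the isotropy group of `γ₀` for the
affine action `θ`: `L^𝓛_{γ₀}(χΛ, vΛ) = L^𝓛_{γ₀}(χ, v)`. -/
theorem isotropy_invariance_of_instantaneous_lagrangian
    {n : ℕ} (hn : 1 ≤ n)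
    {E : Type*} [NormedAddCommGroup E] [NormedSpace ℝ E]
    [MeasurableSpace E] [BorelSpace E]
    (U : Set E) (hU : IsOpen U) (μ : Measure E)
    (Lb : ℝ → Matrix (Fin n) (Fin n) ℝ → (E →L[ℝ] Matrix (Fin n) (Fin n) ℝ) → ℝ)
    (χ Λ v : E → Matrix (Fin n) (Fin n) ℝ)
    (γ₀ : E → (E →L[ℝ] Matrix (Fin n) (Fin n) ℝ))
    (hχ : ∀ m ∈ U, DifferentiableAt ℝ χ m)
    (hΛ : ∀ m ∈ U, DifferentiableAt ℝ Λ m)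
    (hΛinv : ∀ m ∈ U, IsUnit (Λ m))
    (hLinv : ∀ (t : ℝ) (a : Matrix (Fin n) (Fin n) ℝ)
      (B : E →L[ℝ] Matrix (Fin n) (Fin n) ℝ), ∀ m ∈ U,
      Lb t (a * Λ m) ((mulR (Λ m)).comp B) = Lb t a B)
    (hiso : ∀ m ∈ U, ∀ w : E,
      (Λ m)⁻¹ * (γ₀ m w) * Λ m + (Λ m)⁻¹ * (fderiv ℝ Λ m w) = γ₀ m w)
    (t : ℝ) :
    ∫ m in U, Lb t (v m * Λ m)
        (fderiv ℝ (fun x => χ x * Λ x) m - (mulL (χ m * Λ m)).comp (γ₀ m)) ∂μ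
      = ∫ m in U, Lb t (v m) (fderiv ℝ χ m - (mulL (χ m)).comp (γ₀ m)) ∂μ := by
  refine setIntegral_congr_fun hU.measurableSet (fun m hm => ?_)
  have hΛu : Λ m * (Λ m)⁻¹ = 1 :=
    Matrix.mul_nonsing_inv _ ((Matrix.isUnit_iff_isUnit_det _).mp (hΛinv m hm))
  -- from the isotropy condition: dΛ(m) w = Λ m * γ₀ m w − γ₀ m w * Λ m
  have hdΛ : ∀ w : E, fderiv ℝ Λ m w = Λ m * γ₀ m w - γ₀ m w * Λ m := by
    intro w
    have h := congrArg (fun X => Λ m * X) (hiso m hm w)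
    simp only [mul_add, ← mul_assoc, hΛu, one_mul] at h
    exact eq_sub_of_add_eq' h
  -- the derivative of χΛ
  have hder : fderiv ℝ (fun x => χ x * Λ x) m
      = (mulR (Λ m)).comp (fderiv ℝ χ m) + (mulL (χ m)).comp (fderiv ℝ Λ m) :=
    (hasFDerivAt_matmul (hχ m hm) (hΛ m hm)).fderiv
  have key : fderiv ℝ (fun x => χ x * Λ x) m - (mulL (χ m * Λ m)).comp (γ₀ m)
      = (mulR (Λ m)).comp (fderiv ℝ χ m - (mulL (χ m)).comp (γ₀ m)) := by
    ext w
    simp only [hder, ContinuousLinearMap.coe_sub', ContinuousLinearMap.add_apply,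
      ContinuousLinearMap.coe_comp', Function.comp_apply, Pi.sub_apply,
      mulR_apply, mulL_apply, hdΛ w]
    rw [mul_sub, sub_mul]
    simp only [mul_assoc, Matrix.sub_apply, Matrix.add_apply, Matrix.smul_apply, smul_eq_mul]
    ring
  rw [key, hLinv t (v m) _ m hm]
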